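/- For every M ≥ 10, the local equilibrium temperature at the pole for the ice-free planet is below the critical temperature: T*(1)(1) = (Q*s(1)*(1 - a(1)(1)) - A + (C/B)*(g(1) - A))/(B + C) < -10, where a(1)(1) = 0.47. -/
import Mathlib


noncomputable section

open scoped BoundedContinuousFunction

namespace Budyko

/-- Solar constant (W/m²). -/
def Q : ℝ := 343
/-- OLR constant A (W/m²). -/
def A : ℝ := 202
/-- OLR constant B (W/m²/°C). -/
def B : ℝ := 1.9
/-- Transport constant C (W/m²/°C). -/
def C : ℝ := 3.04
/-- Critical temperature (°C). -/
def Tc : ℝ := -10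

/-- Insolation distribution. -/
def s (y : ℝ) : ℝ := 1 - 0.241 * (3 * y ^ 2 - 1)

/-- Clamp to `[0,1]`. -/
def clamp (y : ℝ) : ℝ := min (max y 0) 1

/-- Insolation extended to the real line. -/
def sTilde (y : ℝ) : ℝ := s (clamp y)

/-- Iceline-dependent smooth albedo with steepness `M`. -/
def albedo (M η y : ℝ) : ℝ := 0.47 + 0.15 * Real.tanh (M * (clamp y - η))

/-- The Budyko vector field `F(T,η)(y)`. -/
def F (M : ℝ) (T : ℝ →ᵇ ℝ) (η y : ℝ) : ℝ :=
  Q * sTilde y * (1 - albedo M η y) - (B + C) * T y - A + C * ∫ u in (0:ℝ)..1, T u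

/-- `g(η) = ∫₀¹ Q s(y) (1 - a(η)(y)) dy`. -/
def g (M η : ℝ) : ℝ := ∫ y in (0:ℝ)..1, Q * s y * (1 - albedo M η y)


/-- The local equilibrium temperature profile `T*(η)(y)`. -/
def Tstar (M η y : ℝ) : ℝ :=
  (Q * sTilde y * (1 - albedo M η y) - A + (C / B) * (g M η - A)) / (B + C)

/-- Membership in the class `G_L` of Lipschitz graphs. -/
def MemGL (L : ℝ) (Φ : ℝ → ℝ →ᵇ ℝ) : Prop :=
  ∀ ζ η : ℝ, ‖Φ ζ - Φ η‖ ≤ L * |ζ - η|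

/-- A graph is `r`-admissible if `‖Φ‖_G ≤ r` and every `Φ(η)` is `r`-Lipschitz. -/
def Admissible (r : ℝ) (Φ : ℝ → ℝ →ᵇ ℝ) : Prop :=
  (∀ η : ℝ, ‖Φ η‖ ≤ r) ∧ ∀ η x z : ℝ, |Φ η x - Φ η z| ≤ r * |x - z|

/-- `Ψ` is a graph-transform image of `Φ` (time step `t`, slow parameter `ε`). -/
def IsGTImage (M t ε : ℝ) (Φ Ψ : ℝ → ℝ →ᵇ ℝ) : Prop :=
  ∀ η ξ : ℝ, η = ξ + ε * t * (Φ ξ ξ - Tc) → ∀ y : ℝ, Ψ η y = Φ ξ y + t * F M (Φ ξ) ξ y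

/-- `Φ` is a fixed point of the Budyko graph transform. -/
def IsGTFixed (M t ε : ℝ) (Φ : ℝ → ℝ →ᵇ ℝ) : Prop := IsGTImage M t ε Φ Φ

lemma clamp_one : clamp 1 = 1 := by simp [clamp]

lemma albedo_one_one (M : ℝ) : albedo M 1 1 = 0.47 := by
  simp [albedo, clamp_one]

lemma neg_one_lt_tanh (x : ℝ) : -1 < Real.tanh x := by
  have hc := Real.cosh_pos x
  have he := Real.exp_pos x
  have hsc : Real.sinh x + Real.cosh x = Real.exp x := Real.sinh_add_cosh x
  rw [Real.tanh_eq_sinh_div_cosh, neg_lt, ← neg_div, div_lt_iff₀ hc]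
  nlinarith

lemma continuous_tanh : Continuous Real.tanh := by
  have : Real.tanh = fun x => Real.sinh x / Real.cosh x := by
    funext x; exact Real.tanh_eq_sinh_div_cosh x
  rw [this]
  exact Real.continuous_sinh.div Real.continuous_cosh (fun x => (Real.cosh_pos x).ne')

lemma albedo_ge (M η y : ℝ) : 0.32 ≤ albedo M η y := by
  have := neg_one_lt_tanh (M * (clamp y - η))
  unfold albedo; nlinarith

lemma s_nonneg {y : ℝ} (hy : y ∈ Set.Icc (0:ℝ) 1) : 0 ≤ s y := by
  obtain ⟨h0, h1⟩ := hy
  unfold s; nlinarith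

lemma cont_integrand (M : ℝ) : Continuous (fun y => Q * s y * (1 - albedo M 1 y)) := by
  apply Continuous.mul
  · apply continuous_const.mul
    unfold s; fun_prop
  · apply continuous_const.sub
    unfold albedo clamp
    exact continuous_const.add (continuous_const.mul (continuous_tanh.comp
      (continuous_const.mul (((continuous_id.max continuous_const).min continuous_const).sub
        continuous_const))))

lemma g_le (M : ℝ) : g M 1 ≤ 343 * 0.68 := by
  have h1 : g M 1 ≤ ∫ y in (0:ℝ)..1, (343 * 0.68) * s y := by
    unfold g
    apply intervalIntegral.integral_mono_on (by norm_num)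
    · exact ((cont_integrand M).intervalIntegrable 0 1)
    · apply Continuous.intervalIntegrable
      apply continuous_const.mul; unfold s; fun_prop
    · intro y hy
      have hs := s_nonneg hy
      have ha := albedo_ge M 1 y
      have hQ : Q = 343 := rfl
      rw [hQ]
      nlinarith
  have h2 : (∫ y in (0:ℝ)..1, (343 * 0.68) * s y) = 343 * 0.68 := by
    rw [intervalIntegral.integral_const_mul]
    have : (∫ y in (0:ℝ)..1, s y) = 1 := by
      unfold s
      rw [intervalIntegral.integral_sub intervalIntegrable_const]
      · rw [intervalIntegral.integral_const_mul,
          intervalIntegral.integral_sub, intervalIntegral.integral_const_mul,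
          integral_pow]
        · norm_num
        · apply Continuous.intervalIntegrable; fun_prop
        · exact intervalIntegrable_const
      · apply Continuous.intervalIntegrable; fun_prop
    rw [this]; ring
  linarith

/-- The local equilibrium temperature at the pole of an ice free planet is below -10 °C. -/
theorem pole_equilibrium_temp_below_critical (M : ℝ) (hM : 10 ≤ M) :
    albedo M 1 1 = 0.47 ∧
    Tstar M 1 1 = (Q * s 1 * (1 - 0.47) - A + (C / B) * (g M 1 - A)) / (B + C) ∧
    Tstar M 1 1 < -10 := by
  have ha := albedo_one_one M
  have hs : sTilde 1 = s 1 := by unfold sTilde; rw [clamp_one]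
  have hT : Tstar M 1 1 = (Q * s 1 * (1 - 0.47) - A + (C / B) * (g M 1 - A)) / (B + C) := by
    unfold Tstar; rw [hs, ha]
  refine ⟨ha, hT, ?_⟩
  rw [hT]
  have hg := g_le M
  have hs1 : s 1 = 0.518 := by unfold s; norm_num
  rw [hs1]
  unfold Q A B C
  rw [div_lt_iff₀ (by norm_num)]
  norm_num
  linarith
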